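/- Let a : [0,∞) → [0,∞) be nondecreasing and right-continuous with a(0) = 0, and let c(t) := inf{s ≥ 0 : a(s) > t} be its right inverse; assume c(t) < ∞ for all t ≥ 0. Let G : [0,∞) → [0,∞) be nondecreasing and right-continuous, so that G∘a is nondecreasing and right-continuous with Lebesgue–Stieltjes measure μ_{G∘a}, and let μ_G be the Lebesgue–Stieltjes measure of G. Define c(s−) := lim_{u↑s} c(u) for s > 0 and c(0−) := 0. Then for every Borel measurable f : [0,∞) → [0,∞], ∫_{[0,∞)} f(s) dμ_{G∘a}(s) = ∫_{[0,∞)} f(c(s−)) dμ_G(s); in particular the atoms at 0 contribute f(0)·G(a(0)) = f(0)·G(0) on the left and f(0)·G(0) on the right. -/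

import Mathlib

/-!
For `b ≥ 0` one has `c(s-) ≤ b ↔ s ≤ a(b)`: the direction `⇐` is immediate from the definition
of `c`, and `⇒` uses the right-continuity of `a` to pass from `t < a(r)` for all `r > b` to
`t ≤ a(b)`. Hence the pushforward of `μ_G` under `s ↦ c(s-)` gives `(-∞, b]` the mass
`μ_G((-∞, a(b)]) = G(a(b))`, so it is `μ_{G∘a}`, and the identity is the change of variables
formula for this pushforward. Both measures vanish on `(-∞, 0)`, so restricting to `[0, ∞)`
changes nothing.
-/

open MeasureTheory Set
open scoped ENNReal

noncomputable section

theorem MeasureTheory.Measure.ext_of_Iic_of_ne_top {α : Type*} [TopologicalSpace α]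
    {m : MeasurableSpace α} [SecondCountableTopology α] [LinearOrder α] [OrderTopology α]
    [BorelSpace α] [NoMinOrder α] {μ ν : Measure α} (hμ : ∀ b, μ (Iic b) ≠ ∞)
    (h : ∀ b, μ (Iic b) = ν (Iic b)) : μ = ν := by
  refine Measure.ext_of_Ioc' μ ν (fun p q _ => ?_) (fun p q hpq => ?_)
  · exact ne_top_of_le_ne_top (hμ q) (measure_mono Ioc_subset_Iic_self)
  · have hpq : Iic p ⊆ Iic q := Iic_subset_Iic.2 hpq.le
    rw [← Iic_sdiff_Iic, measure_sdiff hpq nullMeasurableSet_Iic (hμ p),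
      measure_sdiff hpq nullMeasurableSet_Iic (h p ▸ hμ p), h, h]

namespace StieltjesFunction

open Filter Topology

variable {F : StieltjesFunction ℝ}

theorem tendsto_atBot_zero_of_eq_zero (hF : ∀ x < 0, F x = 0) : Tendsto F atBot (𝓝 0) :=
  tendsto_const_nhds.congr' ((eventually_lt_atBot 0).mono fun x hx => (hF x hx).symm)

theorem measure_Iic_of_eq_zero (hF : ∀ x < 0, F x = 0) (b : ℝ) :
    F.measure (Iic b) = ENNReal.ofReal (F b) := by
  simpa using F.measure_Iic (tendsto_atBot_zero_of_eq_zero hF) b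

theorem measure_Iio_zero_of_eq_zero (hF : ∀ x < 0, F x = 0) : F.measure (Iio 0) = 0 := by
  have hlim : Function.leftLim F 0 = 0 :=
    leftLim_eq_of_tendsto (tendsto_const_nhds.congr' (eventually_nhdsWithin_of_forall
      fun x hx => (hF x hx).symm))
  rw [F.measure_Iio (tendsto_atBot_zero_of_eq_zero hF), hlim, sub_zero, ENNReal.ofReal_zero]

theorem restrict_Ici_measure_of_eq_zero (hF : ∀ x < 0, F x = 0) :
    F.measure.restrict (Ici 0) = F.measure :=
  Measure.restrict_eq_self_of_ae_mem <| by
    rw [ae_iff]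
    simpa only [mem_Ici, not_le, Iio_def] using measure_Iio_zero_of_eq_zero hF

end StieltjesFunction

namespace Stmt8

def rightInv (a : ℝ → ℝ) (t : ℝ) : ℝ := sInf {s | 0 ≤ s ∧ t < a s}

/-- `c(s-)`, written as a supremum since `c` is monotone; for `s ≤ 0` the supremum is over `∅`,
and `sSup ∅ = 0` in `ℝ` gives the convention `c(0-) = 0`. -/
def leftLimRightInv (a : ℝ → ℝ) (s : ℝ) : ℝ := sSup (rightInv a '' Ico 0 s)

section RightInv

variable {a : ℝ → ℝ} {s t b r : ℝ}

theorem rightInv_nonneg (a : ℝ → ℝ) (t : ℝ) : 0 ≤ rightInv a t :=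
  Real.sInf_nonneg fun _ hs => hs.1

theorem rightInv_le (hb : 0 ≤ b) (h : t < a b) : rightInv a t ≤ b :=
  csInf_le ⟨0, fun _ hs => hs.1⟩ ⟨hb, h⟩

theorem lt_of_rightInv_lt (ha : Monotone a) (hne : ∃ s, 0 ≤ s ∧ t < a s)
    (h : rightInv a t < r) : t < a r := by
  obtain ⟨s, hs, hsr⟩ := exists_lt_of_csInf_lt hne h
  exact hs.2.trans_le (ha hsr.le)

theorem rightInv_mono (hne : ∀ t, ∃ s, 0 ≤ s ∧ t < a s) : Monotone (rightInv a) :=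
  fun _ t' htt =>
    csInf_le_csInf ⟨0, fun _ hs => hs.1⟩ (hne t') fun _ hs => ⟨hs.1, htt.trans_lt hs.2⟩

theorem le_of_rightInv_le {a : StieltjesFunction ℝ} (hne : ∃ s, 0 ≤ s ∧ t < a s)
    (h : rightInv a t ≤ b) : t ≤ a b :=
  ge_of_tendsto ((a.right_continuous b).mono Ioi_subset_Ici_self) <|
    eventually_nhdsWithin_of_forall fun _ hr => (lt_of_rightInv_lt a.mono hne (h.trans_lt hr)).le

theorem leftLimRightInv_nonneg (a : ℝ → ℝ) (s : ℝ) : 0 ≤ leftLimRightInv a s :=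
  Real.sSup_nonneg (forall_mem_image.2 fun u _ => rightInv_nonneg a u)

theorem bddAbove_rightInv_image_Ico (hne : ∀ t, ∃ s, 0 ≤ s ∧ t < a s) :
    BddAbove (rightInv a '' Ico 0 s) :=
  ⟨rightInv a s, forall_mem_image.2 fun _ hu => rightInv_mono hne hu.2.le⟩

theorem leftLimRightInv_mono (hne : ∀ t, ∃ s, 0 ≤ s ∧ t < a s) :
    Monotone (leftLimRightInv a) := fun _ _ h =>
  Real.sSup_le (forall_mem_image.2 fun _ hu => le_csSup (bddAbove_rightInv_image_Ico hne)
    (mem_image_of_mem _ ⟨hu.1, hu.2.trans_le h⟩)) (leftLimRightInv_nonneg a _)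

end RightInv

theorem leftLimRightInv_le_iff {a : StieltjesFunction ℝ} (hne : ∀ t, ∃ s, 0 ≤ s ∧ t < a s)
    {s b : ℝ} (hb : 0 ≤ b) (hab : 0 ≤ a b) : leftLimRightInv a s ≤ b ↔ s ≤ a b := by
  refine ⟨fun h => ?_, fun h => Real.sSup_le
    (forall_mem_image.2 fun _ hu => rightInv_le hb (hu.2.trans_le h)) hb⟩
  by_contra! hs
  obtain ⟨u, hbu, hus⟩ := exists_between hs
  have hu : rightInv a u ≤ b := (le_csSup (bddAbove_rightInv_image_Ico hne)
    (mem_image_of_mem _ ⟨hab.trans hbu.le, hus⟩)).trans h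
  exact (le_of_rightInv_le (hne u) hu).not_gt hbu

theorem preimage_leftLimRightInv_Iic {a : StieltjesFunction ℝ}
    (hne : ∀ t, ∃ s, 0 ≤ s ∧ t < a s) {b : ℝ} (hb : 0 ≤ b) (hab : 0 ≤ a b) :
    leftLimRightInv a ⁻¹' Iic b = Iic (a b) :=
  ext fun _ => leftLimRightInv_le_iff hne hb hab

theorem map_leftLimRightInv_measure {a G Ga : StieltjesFunction ℝ}
    (hne : ∀ t, ∃ s, 0 ≤ s ∧ t < a s) (ha0 : ∀ x ≤ 0, a x = 0) (hG0 : ∀ x < 0, G x = 0)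
    (hGa : ∀ x, 0 ≤ x → Ga x = G (a x)) (hGa0 : ∀ x < 0, Ga x = 0) :
    G.measure.map (leftLimRightInv a) = Ga.measure := by
  refine (Measure.ext_of_Iic_of_ne_top (fun b => ?_) (fun b => ?_)).symm
  · rw [StieltjesFunction.measure_Iic_of_eq_zero hGa0]
    exact ENNReal.ofReal_ne_top
  · rw [Measure.map_apply (leftLimRightInv_mono hne).measurable measurableSet_Iic,
      StieltjesFunction.measure_Iic_of_eq_zero hGa0]
    rcases le_or_gt 0 b with hb | hb
    · have hab : 0 ≤ a b := ha0 0 le_rfl ▸ a.mono hb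
      rw [preimage_leftLimRightInv_Iic hne hb hab, StieltjesFunction.measure_Iic_of_eq_zero hG0,
        hGa b hb]
    · have hempty : leftLimRightInv a ⁻¹' Iic b = ∅ :=
        eq_empty_of_forall_notMem fun s hs => hb.not_ge ((leftLimRightInv_nonneg a s).trans hs)
      rw [hempty, measure_empty, hGa0 b hb, ENNReal.ofReal_zero]

theorem stmt8_general (a G Ga : StieltjesFunction ℝ)
    (ha0 : ∀ x : ℝ, x ≤ 0 → a x = 0)
    (hG0 : ∀ x : ℝ, x < 0 → G x = 0)
    (hGa : ∀ x : ℝ, 0 ≤ x → Ga x = G (a x))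
    (hGa0 : ∀ x : ℝ, x < 0 → Ga x = 0)
    (hfin : ∀ t : ℝ, 0 ≤ t → ∃ s : ℝ, 0 ≤ s ∧ t < a s)
    (c : ℝ → ℝ) (hc : ∀ t, c t = sInf {s : ℝ | 0 ≤ s ∧ t < a s})
    (cm : ℝ → ℝ) (hcm : ∀ s, cm s = sSup (c '' Set.Ico (0 : ℝ) s))
    (f : ℝ → ℝ≥0∞) (hf : Measurable f) :
    ∫⁻ s in Set.Ici (0 : ℝ), f s ∂Ga.measure
      = ∫⁻ s in Set.Ici (0 : ℝ), f (cm s) ∂G.measure := by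
  obtain rfl : c = rightInv a := funext hc
  obtain rfl : cm = leftLimRightInv a := funext hcm
  have hne : ∀ t, ∃ s, 0 ≤ s ∧ t < a s := fun t =>
    (le_or_gt 0 t).elim (hfin t) fun ht => ⟨0, le_rfl, by rwa [ha0 0 le_rfl]⟩
  rw [Ga.restrict_Ici_measure_of_eq_zero hGa0, G.restrict_Ici_measure_of_eq_zero hG0,
    ← map_leftLimRightInv_measure hne ha0 hG0 hGa hGa0,
    lintegral_map hf (leftLimRightInv_mono hne).measurable]

/-- Lemma 3.10, equation (3.48): let `a` be nondecreasing right-continuous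
with `a = 0` on `(-∞, 0]` and right inverse `c(t) = inf {s ≥ 0 : a(s) > t}` finite for all
`t ≥ 0`; let `G` be nonnegative, nondecreasing, right-continuous, vanishing on `(-∞, 0)`, and
let `Ga` be the (nondecreasing, right-continuous) function equal to `G ∘ a` on `[0,∞)` and to
`0` on `(-∞, 0)`.  With `c(s-) := lim_{u ↑ s} c(u)` (`:= 0` for `s = 0`), one has
`∫_{[0,∞)} f dμ_{G∘a} = ∫_{[0,∞)} f(c(s-)) dμ_G` for every nonnegative Borel `f`. -/
theorem stmt8 (a G Ga : StieltjesFunction ℝ)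
    (ha0 : ∀ x : ℝ, x ≤ 0 → a x = 0)
    (hG0 : ∀ x : ℝ, x < 0 → G x = 0)
    (hG_nonneg : ∀ x : ℝ, 0 ≤ G x)
    (hGa : ∀ x : ℝ, 0 ≤ x → Ga x = G (a x))
    (hGa0 : ∀ x : ℝ, x < 0 → Ga x = 0)
    (hfin : ∀ t : ℝ, 0 ≤ t → ∃ s : ℝ, 0 ≤ s ∧ t < a s)
    (c : ℝ → ℝ) (hc : ∀ t, c t = sInf {s : ℝ | 0 ≤ s ∧ t < a s})
    (cm : ℝ → ℝ) (hcm : ∀ s, cm s = sSup (c '' Set.Ico (0 : ℝ) s))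
    (f : ℝ → ℝ≥0∞) (hf : Measurable f) :
    ∫⁻ s in Set.Ici (0 : ℝ), f s ∂Ga.measure
      = ∫⁻ s in Set.Ici (0 : ℝ), f (cm s) ∂G.measure :=
  stmt8_general a G Ga ha0 hG0 hGa hGa0 hfin c hc cm hcm f hf

end Stmt8
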